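/- arXiv:2005.14177 — 7 statements merged into one kernel-verified Lean document; each statement's English description precedes it below -/
import Mathlib

section
/- Along a solution of the backward equation ∂ℓ(t,·) = K̂ℓ(t,·) with ℓ(t,x) > 0 for all t, x, the relative entropy H(t) := ∑_x q(x) ℓ(t,x) log ℓ(t,x) satisfies the de Bruijn identity ∂H(t) = -E(ℓ_t, log ℓ_t), where E(f,g) = -∑_{x,y} q(y)κ(y,x) f(y)g(x). -/
/-!
Since `(u log u)' = log u + 1`, `H'(t) = ∑ₓ q(x) ∂ℓ(t,x) (log ℓ(t,x) + 1)`, and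
`q(x) ∂ℓ(t,x) = ∑_y q(y) κ(y,x) ℓ(t,y)`. The `+ 1` part then contributes
`∑_y q(y) ℓ(t,y) ∑ₓ κ(y,x) = 0`, because the rows of a generator sum to zero.
-/

open Finset Real

theorem hasDerivAt_sum_mul_mul_log {S : Type*} [Fintype S] (w : S → ℝ) {ℓ : ℝ → S → ℝ}
    {ℓ' : S → ℝ} {t : ℝ} (hℓ_ne : ∀ x, ℓ t x ≠ 0)
    (hℓ : ∀ x, HasDerivAt (fun s => ℓ s x) (ℓ' x) t) :
    HasDerivAt (fun s => ∑ x, w x * ℓ s x * log (ℓ s x))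
      (∑ x, w x * ℓ' x * (log (ℓ t x) + 1)) t := by
  refine HasDerivAt.fun_sum fun x _ => ?_
  have h := ((hasDerivAt_mul_log (hℓ_ne x)).comp t (hℓ x)).const_mul (w x)
  simp only [Function.comp_def, ← mul_assoc] at h
  exact h.congr_deriv (by ring)

theorem sum_sum_mul_generator_eq_zero {S : Type*} [Fintype S] {κ : S → S → ℝ}
    (hκ_row : ∀ x, ∑ y, κ x y = 0) (f : S → ℝ) :
    ∑ x, ∑ y, f y * κ y x = 0 := by
  rw [sum_comm]
  simp [← mul_sum, hκ_row]

theorem relative_entropy_de_bruijn_general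
    {S : Type*} [Fintype S] (κ : S → S → ℝ) (q : S → ℝ) (ℓ : ℝ → S → ℝ)
    (hκ_row : ∀ x, ∑ y, κ x y = 0)
    (hq_pos : ∀ x, 0 < q x)
    (hℓ_pos : ∀ t x, 0 < ℓ t x)
    (hℓ : ∀ t x, HasDerivAt (fun s => ℓ s x)
        (∑ y, (q y / q x) * κ y x * ℓ t y) t) :
    ∀ t, HasDerivAt (fun s => ∑ x, q x * ℓ s x * Real.log (ℓ s x))
      (-(-(∑ x, ∑ y, q y * κ y x * ℓ t y * Real.log (ℓ t x)))) t := by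
  intro t
  have hflux : ∀ x, q x * ∑ y, q y / q x * κ y x * ℓ t y = ∑ y, q y * κ y x * ℓ t y := by
    intro x
    rw [mul_sum]
    refine sum_congr rfl fun y _ => ?_
    field_simp [(hq_pos x).ne']
  have hmass : ∑ x, ∑ y, q y * κ y x * ℓ t y = 0 := by
    simpa only [mul_right_comm] using
      sum_sum_mul_generator_eq_zero hκ_row fun y => q y * ℓ t y
  convert hasDerivAt_sum_mul_mul_log q (fun x => (hℓ_pos t x).ne') (hℓ t) using 1
  simp only [mul_add, mul_one, hflux, sum_add_distrib, hmass, sum_mul, neg_neg, add_zero]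

theorem relative_entropy_de_bruijn
    {S : Type*} [Fintype S] (κ : S → S → ℝ) (q : S → ℝ) (ℓ : ℝ → S → ℝ)
    (hκ_off : ∀ x y, x ≠ y → 0 ≤ κ x y)
    (hκ_row : ∀ x, ∑ y, κ x y = 0)
    (hq_pos : ∀ x, 0 < q x)
    (hq_sum : ∑ x, q x = 1)
    (hq_inv : ∀ x, ∑ y, q y * κ y x = 0)
    (hℓ_pos : ∀ t x, 0 < ℓ t x)
    (hℓ : ∀ t x, HasDerivAt (fun s => ℓ s x)
        (∑ y, (q y / q x) * κ y x * ℓ t y) t) :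
    ∀ t, HasDerivAt (fun s => ∑ x, q x * ℓ s x * Real.log (ℓ s x))
      (-(-(∑ x, ∑ y, q y * κ y x * ℓ t y * Real.log (ℓ t x)))) t :=
  relative_entropy_de_bruijn_general κ q ℓ hκ_row hq_pos hℓ_pos hℓ
end

section
/- The entropy dissipation rate is nonnegative: for any strictly positive ℓ : S → (0,∞), the quantity E(ℓ, log ℓ) = -∑_{x,y} q(y)κ(y,x) ℓ(y) log ℓ(x) equals ∑_x q(x) ℓ(x) ∑_{y≠x} κ̂(x,y) Ψ(ℓ(y)/ℓ(x)), where Ψ(r) = r log r - r + 1 ≥ 0, and hence E(ℓ, log ℓ) ≥ 0. -/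
lemma psi_nonneg' {r : ℝ} (hr : 0 < r) : 0 ≤ r * Real.log r - r + 1 := by
  have h := Real.log_le_sub_one_of_pos (show (0:ℝ) < r⁻¹ by positivity)
  rw [Real.log_inv] at h
  nlinarith [mul_le_mul_of_nonneg_left h hr.le, mul_inv_cancel₀ hr.ne']

theorem entropy_dissipation_nonneg
    {S : Type*} [Fintype S] [DecidableEq S] (κ : S → S → ℝ) (q : S → ℝ)
    (ℓ : S → ℝ)
    (hκ_off : ∀ x y, x ≠ y → 0 ≤ κ x y)
    (hκ_row : ∀ x, ∑ y, κ x y = 0)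
    (hq_pos : ∀ x, 0 < q x)
    (hq_sum : ∑ x, q x = 1)
    (hq_inv : ∀ x, ∑ y, q y * κ y x = 0)
    (hℓ_pos : ∀ x, 0 < ℓ x) :
    (-(∑ x, ∑ y, q y * κ y x * ℓ y * Real.log (ℓ x)))
      = ∑ x, q x * ℓ x *
          ∑ y ∈ Finset.univ.filter (fun y => y ≠ x),
            (q y / q x) * κ y x *
              ((ℓ y / ℓ x) * Real.log (ℓ y / ℓ x) - (ℓ y / ℓ x) + 1)
    ∧ 0 ≤ -(∑ x, ∑ y, q y * κ y x * ℓ y * Real.log (ℓ x)) := by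
  set F : S → S → ℝ := fun x y =>
    q y * κ y x * (ℓ y * Real.log (ℓ y) - ℓ y * Real.log (ℓ x) - ℓ y + ℓ x) with hF
  have heq : (-(∑ x, ∑ y, q y * κ y x * ℓ y * Real.log (ℓ x)))
      = ∑ x, q x * ℓ x *
          ∑ y ∈ Finset.univ.filter (fun y => y ≠ x),
            (q y / q x) * κ y x *
              ((ℓ y / ℓ x) * Real.log (ℓ y / ℓ x) - (ℓ y / ℓ x) + 1) := by
    have step1 : ∀ x : S, q x * ℓ x *
        ∑ y ∈ Finset.univ.filter (fun y => y ≠ x),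
          (q y / q x) * κ y x *
            ((ℓ y / ℓ x) * Real.log (ℓ y / ℓ x) - (ℓ y / ℓ x) + 1)
        = ∑ y, F x y := by
      intro x
      rw [Finset.mul_sum, Finset.sum_filter]
      refine Finset.sum_congr rfl fun y _ => ?_
      by_cases hyx : y = x
      · subst hyx
        simp [hF]
      · rw [if_pos hyx, hF]
        have hqx := (hq_pos x).ne'
        have hlx := (hℓ_pos x).ne'
        rw [Real.log_div (hℓ_pos y).ne' hlx]
        field_simp
    rw [Finset.sum_congr rfl fun x _ => step1 x]
    have split : ∀ x y : S, F x y =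
        q y * κ y x * ℓ y * Real.log (ℓ y)
        - q y * κ y x * ℓ y * Real.log (ℓ x)
        - q y * κ y x * ℓ y + q y * κ y x * ℓ x := by
      intro x y; rw [hF]; ring
    have h1 : ∑ x : S, ∑ y : S, q y * κ y x * ℓ y * Real.log (ℓ y) = 0 := by
      rw [Finset.sum_comm]
      refine Finset.sum_eq_zero fun y _ => ?_
      have : ∑ x : S, q y * κ y x * ℓ y * Real.log (ℓ y)
          = (q y * ℓ y * Real.log (ℓ y)) * ∑ x : S, κ y x := by
        rw [Finset.mul_sum]; exact Finset.sum_congr rfl fun x _ => by ring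
      rw [this, hκ_row, mul_zero]
    have h3 : ∑ x : S, ∑ y : S, q y * κ y x * ℓ y = 0 := by
      rw [Finset.sum_comm]
      refine Finset.sum_eq_zero fun y _ => ?_
      have : ∑ x : S, q y * κ y x * ℓ y = (q y * ℓ y) * ∑ x : S, κ y x := by
        rw [Finset.mul_sum]; exact Finset.sum_congr rfl fun x _ => by ring
      rw [this, hκ_row, mul_zero]
    have h4 : ∑ x : S, ∑ y : S, q y * κ y x * ℓ x = 0 := by
      refine Finset.sum_eq_zero fun x _ => ?_
      have : ∑ y : S, q y * κ y x * ℓ x = (∑ y : S, q y * κ y x) * ℓ x := by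
        rw [Finset.sum_mul]
      rw [this, hq_inv, zero_mul]
    calc -(∑ x, ∑ y, q y * κ y x * ℓ y * Real.log (ℓ x))
        = (∑ x : S, ∑ y : S, q y * κ y x * ℓ y * Real.log (ℓ y))
          - (∑ x, ∑ y, q y * κ y x * ℓ y * Real.log (ℓ x))
          - (∑ x : S, ∑ y : S, q y * κ y x * ℓ y)
          + (∑ x : S, ∑ y : S, q y * κ y x * ℓ x) := by
          rw [h1, h3, h4]; ring
      _ = ∑ x : S, ∑ y : S, F x y := by
          rw [← Finset.sum_sub_distrib, ← Finset.sum_sub_distrib,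
            ← Finset.sum_add_distrib]
          refine Finset.sum_congr rfl fun x _ => ?_
          rw [← Finset.sum_sub_distrib, ← Finset.sum_sub_distrib,
            ← Finset.sum_add_distrib]
          exact Finset.sum_congr rfl fun y _ => (split x y).symm
  refine ⟨heq, ?_⟩
  rw [heq]
  refine Finset.sum_nonneg fun x _ => ?_
  refine mul_nonneg (mul_nonneg (hq_pos x).le (hℓ_pos x).le) ?_
  refine Finset.sum_nonneg fun y hy => ?_
  have hyx : y ≠ x := (Finset.mem_filter.mp hy).2
  refine mul_nonneg (mul_nonneg (div_nonneg (hq_pos y).le (hq_pos x).le)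
    (hκ_off y x hyx)) ?_
  exact psi_nonneg' (div_pos (hℓ_pos y) (hℓ_pos x))
end

section
/- Under detailed balance, the entropy dissipation rate admits the Fisher-information representation: for ℓ : S → (0,∞), E(ℓ, log ℓ) = (1/2) ∑_{(x,y): κ(y,x)>0} κ(y,x) q(y) (log ℓ(y) - log ℓ(x))² Θ(ℓ(y), ℓ(x)), where Θ(a,b) = (a - b)/(log a - log b) for a ≠ b and Θ(a,a) = a is the logarithmic mean. -/
noncomputable def logMean (a b : ℝ) : ℝ :=
  if a = b then a else (a - b) / (Real.log a - Real.log b)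

theorem fisher_information_representation
    {S : Type*} [Fintype S] (κ : S → S → ℝ) (q : S → ℝ) (ℓ : S → ℝ)
    (hκ_off : ∀ x y, x ≠ y → 0 ≤ κ x y)
    (hκ_row : ∀ x, ∑ y, κ x y = 0)
    (hq_pos : ∀ x, 0 < q x)
    (hq_sum : ∑ x, q x = 1)
    (hq_inv : ∀ x, ∑ y, q y * κ y x = 0)
    (hdb : ∀ x y, q y * κ y x = q x * κ x y)
    (hℓ_pos : ∀ x, 0 < ℓ x) :
    (-(∑ x, ∑ y, q y * κ y x * ℓ y * Real.log (ℓ x)))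
      = (1/2) * ∑ p ∈ (Finset.univ ×ˢ Finset.univ).filter
            (fun p : S × S => 0 < κ p.2 p.1),
          κ p.2 p.1 * q p.2 * (Real.log (ℓ p.2) - Real.log (ℓ p.1))^2 *
            logMean (ℓ p.2) (ℓ p.1) := by
  have hlog : ∀ a b : ℝ, 0 < a → 0 < b →
      (Real.log a - Real.log b)^2 * logMean a b = (a - b) * (Real.log a - Real.log b) := by
    intro a b ha hb
    by_cases h : a = b
    · simp [logMean, h]
    · have hne : Real.log a ≠ Real.log b := fun hl =>
        h (Real.log_injOn_pos (Set.mem_Ioi.2 ha) (Set.mem_Ioi.2 hb) hl)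
      have hsub : Real.log a - Real.log b ≠ 0 := sub_ne_zero.2 hne
      rw [logMean, if_neg h]
      field_simp
  have hfull : (∑ p ∈ (Finset.univ ×ˢ Finset.univ).filter
            (fun p : S × S => 0 < κ p.2 p.1),
          κ p.2 p.1 * q p.2 * (Real.log (ℓ p.2) - Real.log (ℓ p.1))^2 *
            logMean (ℓ p.2) (ℓ p.1))
      = ∑ x, ∑ y, q y * κ y x * ((ℓ y - ℓ x) * (Real.log (ℓ y) - Real.log (ℓ x))) := by
    rw [← Finset.sum_product' (f := fun x y =>
      q y * κ y x * ((ℓ y - ℓ x) * (Real.log (ℓ y) - Real.log (ℓ x))))]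
    rw [Finset.sum_filter]
    apply Finset.sum_congr rfl
    intro p _
    obtain ⟨x, y⟩ := p
    simp only
    by_cases hxy : 0 < κ y x
    · rw [if_pos hxy]
      have := hlog (ℓ y) (ℓ x) (hℓ_pos y) (hℓ_pos x)
      linear_combination (q y * κ y x) * this
    · rw [if_neg hxy]
      by_cases hx : x = y
      · subst hx; simp
      · have : κ y x = 0 := le_antisymm (not_lt.1 hxy) (hκ_off y x (Ne.symm hx))
        simp [this]
  rw [hfull]
  have key : ∀ x y : S, q y * κ y x * ((ℓ y - ℓ x) * (Real.log (ℓ y) - Real.log (ℓ x)))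
      = q y * κ y x * ℓ y * Real.log (ℓ y)
        - q y * κ y x * ℓ y * Real.log (ℓ x)
        - q y * κ y x * ℓ x * Real.log (ℓ y)
        + q y * κ y x * ℓ x * Real.log (ℓ x) := by intros; ring
  have h1 : ∑ x : S, ∑ y : S, q y * κ y x * ℓ y * Real.log (ℓ y) = 0 := by
    rw [Finset.sum_comm]
    apply Finset.sum_eq_zero
    intro y _
    have : ∑ x : S, q y * κ y x * ℓ y * Real.log (ℓ y)
        = (∑ x : S, κ y x) * (q y * ℓ y * Real.log (ℓ y)) := by
      rw [Finset.sum_mul]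
      exact Finset.sum_congr rfl (fun x _ => by ring)
    rw [this, hκ_row]; ring
  have h4 : ∑ x : S, ∑ y : S, q y * κ y x * ℓ x * Real.log (ℓ x) = 0 := by
    apply Finset.sum_eq_zero
    intro x _
    have : ∑ y : S, q y * κ y x * ℓ x * Real.log (ℓ x)
        = (∑ y : S, q y * κ y x) * (ℓ x * Real.log (ℓ x)) := by
      rw [Finset.sum_mul]
      exact Finset.sum_congr rfl (fun y _ => by ring)
    rw [this, hq_inv]; ring
  have h3 : ∑ x : S, ∑ y : S, q y * κ y x * ℓ x * Real.log (ℓ y)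
      = ∑ x : S, ∑ y : S, q y * κ y x * ℓ y * Real.log (ℓ x) := by
    rw [Finset.sum_comm]
    apply Finset.sum_congr rfl
    intro x _
    apply Finset.sum_congr rfl
    intro y _
    have := hdb x y
    linear_combination (-(ℓ y * Real.log (ℓ x))) * this
  simp_rw [key, Finset.sum_add_distrib, Finset.sum_sub_distrib]
  rw [h1, h4, h3]
  ring
end

section
/- Under detailed balance, E(e^g, g) ≥ 4 E(e^{g/2}, e^{g/2}) for every function g : S → ℝ, where E is the Dirichlet form; consequently E(ℓ, log ℓ) ≥ 4 E(√ℓ, √ℓ) for every ℓ : S → (0,∞). -/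
/-!
Writing the Dirichlet form as the symmetrised edge sum
`E(f, h) = ½ ∑ q(y) κ(y,x) (f y - f x) (h y - h x)`, whose off-diagonal weights are nonnegative,
the estimate reduces edge by edge to `4 (e^{u/2} - e^{v/2})² ≤ (e^u - e^v) (u - v)`, which is
`2 (a - b)² ≤ (a² - b²) log (a / b)` at `a = e^{u/2}`, `b = e^{v/2}`. The latter says that the
logarithmic mean is at most the arithmetic mean.
-/

open Real

lemma two_mul_sub_one_le_add_one_mul_log {t : ℝ} (ht : 1 ≤ t) :
    2 * (t - 1) ≤ (t + 1) * log t := by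
  let F : ℝ → ℝ := fun s => (s + 1) * log s - 2 * (s - 1)
  have hF_deriv : ∀ s : ℝ, 0 < s → HasDerivAt F (1 * log s + (s + 1) * s⁻¹ - 2) s := fun s hs =>
    (((hasDerivAt_id s).add_const 1).mul (hasDerivAt_log hs.ne')).sub
      (((hasDerivAt_id s).sub_const 1).const_mul 2 |>.congr_deriv (by simp))
  have hpos : ∀ s ∈ Set.Ici (1 : ℝ), 0 < s := fun s hs => one_pos.trans_le hs
  have hF_mono : MonotoneOn F (Set.Ici 1) := by
    refine monotoneOn_of_hasDerivWithinAt_nonneg (convex_Ici 1)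
      (fun s hs => (hF_deriv s (hpos s hs)).continuousAt.continuousWithinAt)
      (fun s hs => (hF_deriv s (hpos s (interior_subset hs))).hasDerivWithinAt) fun s hs => ?_
    have hs0 := hpos s (interior_subset hs)
    have hlog : 1 - s⁻¹ ≤ log s := by
      linarith [log_inv s ▸ log_le_sub_one_of_pos (inv_pos.2 hs0)]
    have : (s + 1) * s⁻¹ = 1 + s⁻¹ := by field_simp
    rw [this]
    linarith
  have := hF_mono Set.self_mem_Ici (Set.mem_Ici.2 ht) ht
  simp only [F, log_one] at this
  linarith

lemma two_mul_sub_le_add_mul_log_div {a b : ℝ} (hb : 0 < b) (hba : b ≤ a) :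
    2 * (a - b) ≤ (a + b) * log (a / b) := by
  have key := two_mul_sub_one_le_add_one_mul_log ((one_le_div hb).2 hba)
  have h := mul_le_mul_of_nonneg_left key hb.le
  have hab : b * (a / b) = a := by field_simp
  nlinarith

lemma two_mul_sub_sq_le_sq_sub_mul_log_div {a b : ℝ} (ha : 0 < a) (hb : 0 < b) :
    2 * (a - b) ^ 2 ≤ (a ^ 2 - b ^ 2) * log (a / b) := by
  wlog hba : b ≤ a generalizing a b
  · have h := this hb ha (le_of_not_ge hba)
    rw [← inv_div, log_inv] at h
    linarith
  have h := mul_le_mul_of_nonneg_left (two_mul_sub_le_add_mul_log_div hb hba) (sub_nonneg.2 hba)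
  linarith

lemma four_mul_exp_half_sub_sq_le (u v : ℝ) :
    4 * (exp (u / 2) - exp (v / 2)) ^ 2 ≤ (exp u - exp v) * (u - v) := by
  have h := two_mul_sub_sq_le_sq_sub_mul_log_div (exp_pos (u / 2)) (exp_pos (v / 2))
  have htwice : ∀ w : ℝ, ((2 : ℕ) : ℝ) * (w / 2) = w := fun w => by push_cast; ring
  rw [← exp_sub, log_exp, ← exp_nat_mul, ← exp_nat_mul, htwice, htwice] at h
  linarith

section DirichletForm

variable {S : Type*} [Fintype S] (κ : S → S → ℝ) (q : S → ℝ)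

def dirichletForm (f h : S → ℝ) : ℝ :=
  -(∑ x, ∑ y, q y * κ y x * f y * h x)

variable {κ q}

lemma dirichletForm_eq_half_sum (hκ_row : ∀ x, ∑ y, κ x y = 0)
    (hdb : ∀ x y, q y * κ y x = q x * κ x y) (f h : S → ℝ) :
    dirichletForm κ q f h = (1 / 2) * ∑ x, ∑ y, q y * κ y x * (f y - f x) * (h y - h x) := by
  have hswap : ∀ F : S → S → ℝ, ∑ x, ∑ y, q y * κ y x * F y x = ∑ x, ∑ y, q y * κ y x * F x y := by
    intro F
    rw [Finset.sum_comm]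
    simp_rw [hdb]
  have hrow : ∀ φ : S → ℝ, ∑ x, ∑ y, q y * κ y x * φ y = 0 := by
    intro φ
    rw [Finset.sum_comm]
    refine Finset.sum_eq_zero fun y _ => ?_
    simp_rw [mul_comm (q y), mul_assoc, ← Finset.sum_mul, hκ_row, zero_mul]
  have hdiag : ∑ x, ∑ y, q y * κ y x * (f x * h x) = 0 :=
    (hswap fun y _ => f y * h y).symm.trans (hrow fun y => f y * h y)
  have hcross := hswap fun y x => f x * h y
  have hexpand : ∀ x y, q y * κ y x * (f y - f x) * (h y - h x) =
      q y * κ y x * (f y * h y) - q y * κ y x * (f x * h y) - q y * κ y x * (f y * h x)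
        + q y * κ y x * (f x * h x) := fun x y => by ring
  simp only [hexpand, Finset.sum_add_distrib, Finset.sum_sub_distrib, dirichletForm]
  rw [hrow fun y => f y * h y, hdiag, hcross]
  simp only [mul_assoc]
  ring

lemma four_mul_dirichletForm_exp_half_le (hκ_off : ∀ x y, x ≠ y → 0 ≤ κ x y)
    (hκ_row : ∀ x, ∑ y, κ x y = 0) (hq : ∀ x, 0 ≤ q x)
    (hdb : ∀ x y, q y * κ y x = q x * κ x y) (g : S → ℝ) :
    4 * dirichletForm κ q (fun x => exp (g x / 2)) (fun x => exp (g x / 2))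
      ≤ dirichletForm κ q (fun x => exp (g x)) g := by
  rw [dirichletForm_eq_half_sum hκ_row hdb, dirichletForm_eq_half_sum hκ_row hdb, mul_left_comm]
  refine mul_le_mul_of_nonneg_left ?_ one_half_pos.le
  simp_rw [Finset.mul_sum]
  refine Finset.sum_le_sum fun x _ => Finset.sum_le_sum fun y _ => ?_
  by_cases hyx : y = x
  · simp [hyx]
  · have hw : 0 ≤ q y * κ y x := mul_nonneg (hq y) (hκ_off y x hyx)
    linarith [mul_le_mul_of_nonneg_left (four_mul_exp_half_sub_sq_le (g y) (g x)) hw]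

lemma four_mul_dirichletForm_sqrt_le (hκ_off : ∀ x y, x ≠ y → 0 ≤ κ x y)
    (hκ_row : ∀ x, ∑ y, κ x y = 0) (hq : ∀ x, 0 ≤ q x)
    (hdb : ∀ x y, q y * κ y x = q x * κ x y) {ℓ : S → ℝ} (hℓ : ∀ x, 0 < ℓ x) :
    4 * dirichletForm κ q (fun x => √(ℓ x)) (fun x => √(ℓ x))
      ≤ dirichletForm κ q ℓ (fun x => log (ℓ x)) := by
  have h := four_mul_dirichletForm_exp_half_le hκ_off hκ_row hq hdb fun x => log (ℓ x)
  have hexp : ∀ x, exp (log (ℓ x)) = ℓ x := fun x => exp_log (hℓ x)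
  have hexp_half : ∀ x, exp (log (ℓ x) / 2) = √(ℓ x) := fun x => by
    rw [sqrt_eq_rpow, rpow_def_of_pos (hℓ x), div_eq_mul_one_div]
  simpa only [hexp, hexp_half] using h

end DirichletForm

theorem diaconis_saloff_coste_estimate_general
    {S : Type*} [Fintype S] (κ : S → S → ℝ) (q : S → ℝ)
    (hκ_off : ∀ x y, x ≠ y → 0 ≤ κ x y)
    (hκ_row : ∀ x, ∑ y, κ x y = 0)
    (hq_pos : ∀ x, 0 < q x)
    (hdb : ∀ x y, q y * κ y x = q x * κ x y) :
    (∀ g : S → ℝ,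
      4 * (-(∑ x, ∑ y, q y * κ y x * Real.exp (g y / 2) * Real.exp (g x / 2)))
        ≤ -(∑ x, ∑ y, q y * κ y x * Real.exp (g y) * g x))
    ∧ (∀ ℓ : S → ℝ, (∀ x, 0 < ℓ x) →
      4 * (-(∑ x, ∑ y, q y * κ y x * Real.sqrt (ℓ y) * Real.sqrt (ℓ x)))
        ≤ -(∑ x, ∑ y, q y * κ y x * ℓ y * Real.log (ℓ x))) :=
  have hq x := (hq_pos x).le
  ⟨four_mul_dirichletForm_exp_half_le hκ_off hκ_row hq hdb,
    fun _ hℓ => four_mul_dirichletForm_sqrt_le hκ_off hκ_row hq hdb hℓ⟩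

theorem diaconis_saloff_coste_estimate
    {S : Type*} [Fintype S] (κ : S → S → ℝ) (q : S → ℝ)
    (hκ_off : ∀ x y, x ≠ y → 0 ≤ κ x y)
    (hκ_row : ∀ x, ∑ y, κ x y = 0)
    (hq_pos : ∀ x, 0 < q x)
    (hq_sum : ∑ x, q x = 1)
    (hq_inv : ∀ x, ∑ y, q y * κ y x = 0)
    (hdb : ∀ x y, q y * κ y x = q x * κ x y) :
    (∀ g : S → ℝ,
      4 * (-(∑ x, ∑ y, q y * κ y x * Real.exp (g y / 2) * Real.exp (g x / 2)))
        ≤ -(∑ x, ∑ y, q y * κ y x * Real.exp (g y) * g x))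
    ∧ (∀ ℓ : S → ℝ, (∀ x, 0 < ℓ x) →
      4 * (-(∑ x, ∑ y, q y * κ y x * Real.sqrt (ℓ y) * Real.sqrt (ℓ x)))
        ≤ -(∑ x, ∑ y, q y * κ y x * ℓ y * Real.log (ℓ x))) :=
  diaconis_saloff_coste_estimate_general κ q hκ_off hκ_row hq_pos hdb
end

section
/- Let Φ : (0,∞) → ℝ be convex and differentiable with derivative φ, and define the Bregman divergence div^Φ(η|ξ) := Φ(η) - Φ(ξ) - (η - ξ)φ(ξ). For any strictly positive ℓ : S → (0,∞), the Φ-Fisher information I^Φ := ∑_{x,y} q(x) κ̂(x,y) div^Φ(ℓ(y)|ℓ(x)) equals E(ℓ, φ∘ℓ) = -∑_{x,y} q(y)κ(y,x) ℓ(y) φ(ℓ(x)), and I^Φ ≥ 0. -/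
lemma bregman_nonneg {Φ φ : ℝ → ℝ} (hΦ : ConvexOn ℝ (Set.Ioi (0:ℝ)) Φ)
    (hφ : ∀ x : ℝ, 0 < x → HasDerivAt Φ (φ x) x)
    {a b : ℝ} (ha : 0 < a) (hb : 0 < b) :
    0 ≤ Φ b - Φ a - (b - a) * φ a := by
  rcases lt_trichotomy a b with h | h | h
  · have hs := hΦ.le_slope_of_hasDerivAt (Set.mem_Ioi.2 ha) (Set.mem_Ioi.2 hb) h (hφ a ha)
    rw [slope_def_field, le_div_iff₀ (by linarith)] at hs
    nlinarith
  · simp [h]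
  · have hs := hΦ.slope_le_of_hasDerivAt (Set.mem_Ioi.2 hb) (Set.mem_Ioi.2 ha) h (hφ a ha)
    rw [slope_def_field, div_le_iff₀ (by linarith)] at hs
    nlinarith

theorem phi_fisher_information
    {S : Type*} [Fintype S] (κ : S → S → ℝ) (q : S → ℝ)
    (Φ φ : ℝ → ℝ) (ℓ : S → ℝ)
    (hκ_off : ∀ x y, x ≠ y → 0 ≤ κ x y)
    (hκ_row : ∀ x, ∑ y, κ x y = 0)
    (hq_pos : ∀ x, 0 < q x)
    (hq_sum : ∑ x, q x = 1)
    (hq_inv : ∀ x, ∑ y, q y * κ y x = 0)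
    (hΦ : ConvexOn ℝ (Set.Ioi (0:ℝ)) Φ)
    (hφ : ∀ x : ℝ, 0 < x → HasDerivAt Φ (φ x) x)
    (hℓ_pos : ∀ x, 0 < ℓ x) :
    (∑ x, ∑ y, q x * ((q y / q x) * κ y x) *
        (Φ (ℓ y) - Φ (ℓ x) - (ℓ y - ℓ x) * φ (ℓ x)))
      = -(∑ x, ∑ y, q y * κ y x * ℓ y * φ (ℓ x))
    ∧ 0 ≤ ∑ x, ∑ y, q x * ((q y / q x) * κ y x) *
        (Φ (ℓ y) - Φ (ℓ x) - (ℓ y - ℓ x) * φ (ℓ x)) := by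
  have hw : ∀ x y : S, q x * ((q y / q x) * κ y x) = q y * κ y x := by
    intro x y
    field_simp [(hq_pos x).ne']
  constructor
  · have key : (∑ x, ∑ y, q x * ((q y / q x) * κ y x) *
        (Φ (ℓ y) - Φ (ℓ x) - (ℓ y - ℓ x) * φ (ℓ x)))
        = (∑ x, ∑ y, q y * κ y x * Φ (ℓ y))
          - (∑ x, ∑ y, q y * κ y x * Φ (ℓ x))
          - (∑ x, ∑ y, q y * κ y x * ℓ y * φ (ℓ x))
          + (∑ x, ∑ y, q y * κ y x * ℓ x * φ (ℓ x)) := by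
      simp only [hw]
      rw [← Finset.sum_sub_distrib, ← Finset.sum_sub_distrib, ← Finset.sum_add_distrib]
      refine Finset.sum_congr rfl fun x _ => ?_
      rw [← Finset.sum_sub_distrib, ← Finset.sum_sub_distrib, ← Finset.sum_add_distrib]
      refine Finset.sum_congr rfl fun y _ => ?_
      ring
    have h1 : (∑ x, ∑ y : S, q y * κ y x * Φ (ℓ y)) = 0 := by
      rw [Finset.sum_comm]
      refine Finset.sum_eq_zero fun y _ => ?_
      have : (∑ x, q y * κ y x * Φ (ℓ y)) = q y * Φ (ℓ y) * ∑ x, κ y x := by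
        rw [Finset.mul_sum]; exact Finset.sum_congr rfl fun x _ => by ring
      rw [this, hκ_row, mul_zero]
    have h2 : (∑ x, ∑ y, q y * κ y x * Φ (ℓ x)) = 0 := by
      refine Finset.sum_eq_zero fun x _ => ?_
      have : (∑ y, q y * κ y x * Φ (ℓ x)) = (∑ y, q y * κ y x) * Φ (ℓ x) := by
        rw [Finset.sum_mul]
      rw [this, hq_inv, zero_mul]
    have h4 : (∑ x, ∑ y, q y * κ y x * ℓ x * φ (ℓ x)) = 0 := by
      refine Finset.sum_eq_zero fun x _ => ?_
      have : (∑ y, q y * κ y x * ℓ x * φ (ℓ x)) = (∑ y, q y * κ y x) * (ℓ x * φ (ℓ x)) := by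
        rw [Finset.sum_mul]; exact Finset.sum_congr rfl fun y _ => by ring
      rw [this, hq_inv, zero_mul]
    rw [key, h1, h2, h4]; ring
  · refine Finset.sum_nonneg fun x _ => Finset.sum_nonneg fun y _ => ?_
    rw [hw]
    rcases eq_or_ne x y with rfl | hxy
    · simp
    · exact mul_nonneg (mul_nonneg (hq_pos y).le (hκ_off y x (Ne.symm hxy)))
        (bregman_nonneg hΦ hφ (hℓ_pos x) (hℓ_pos y))
end

section
/- Along a solution of the backward equation ∂ℓ(t,·) = K̂ℓ(t,·) with ℓ(t,·) : S → (0,∞), the Φ-relative entropy H^Φ(t) := ∑_x q(x) Φ(ℓ(t,x)) satisfies the generalized de Bruijn identity ∂H^Φ(t) = -E(ℓ_t, φ(ℓ_t)), where φ = Φ' and E(f,g) = -∑_{x,y} q(y)κ(y,x)f(y)g(x); in particular H^Φ is non-increasing. -/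
/-!
Differentiating under the finite sum and using the backward equation gives
`∂H = ∑_{x,y} q(y) κ(y,x) ℓ(y) φ(ℓ(x))`. By the tangent-line inequality of the convex `Φ`,
`ℓ(y) φ(ℓ(x)) ≤ Φ(ℓ(y)) - ψ(ℓ(x))` with `ψ(u) = Φ(u) - u φ(u)`, with equality for `x = y`.
Since the weights `q(y) κ(y,x)` are nonnegative off the diagonal and all their row and column
sums vanish (`κ` is a generator, `q` is invariant), the sum is at most
`∑_y q(y) Φ(ℓ(y)) ∑_x κ(y,x) - ∑_x ψ(ℓ(x)) ∑_y q(y) κ(y,x) = 0`.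
-/

open Finset

lemma ConvexOn.mul_sub_le_sub_of_hasDerivAt {D : Set ℝ} {f : ℝ → ℝ} {f' a b : ℝ}
    (hf : ConvexOn ℝ D f) (ha : a ∈ D) (hb : b ∈ D) (hderiv : HasDerivAt f f' b) :
    f' * (a - b) ≤ f a - f b := by
  rcases lt_trichotomy a b with hab | rfl | hab
  · have h := hf.slope_le_of_hasDerivAt ha hb hab hderiv
    rw [slope_def_field, div_le_iff₀ (sub_pos.2 hab)] at h
    linarith
  · simp
  · have h := hf.le_slope_of_hasDerivAt hb ha hab hderiv
    rwa [slope_def_field, le_div_iff₀ (sub_pos.2 hab)] at h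

lemma sum_sum_mul_le_zero_of_le_sub {S : Type*} [Fintype S] {w F : S → S → ℝ} (A B : S → ℝ)
    (hw_off : ∀ x y, x ≠ y → 0 ≤ w y x) (hw_row : ∀ y, ∑ x, w y x = 0)
    (hw_col : ∀ x, ∑ y, w y x = 0) (hF_off : ∀ x y, x ≠ y → F y x ≤ A y - B x)
    (hF_diag : ∀ x, F x x = A x - B x) :
    ∑ x, ∑ y, w y x * F y x ≤ 0 := by
  have hterm : ∀ x y, w y x * F y x ≤ w y x * A y - w y x * B x := by
    intro x y
    rcases eq_or_ne x y with rfl | hxy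
    · rw [hF_diag, mul_sub]
    · rw [← mul_sub]
      exact mul_le_mul_of_nonneg_left (hF_off x y hxy) (hw_off x y hxy)
  have hA : ∑ x, ∑ y, w y x * A y = 0 := by
    rw [sum_comm]
    simp_rw [← sum_mul, hw_row, zero_mul, sum_const_zero]
  have hB : ∑ x, ∑ y, w y x * B x = 0 := by
    simp_rw [← sum_mul, hw_col, zero_mul, sum_const_zero]
  calc ∑ x, ∑ y, w y x * F y x
      ≤ ∑ x, ∑ y, (w y x * A y - w y x * B x) :=
        sum_le_sum fun x _ => sum_le_sum fun y _ => hterm x y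
    _ = 0 := by simp_rw [sum_sub_distrib, hA, hB, sub_zero]

section Generator

variable {S : Type*} [Fintype S] {κ : S → S → ℝ} {q : S → ℝ}

lemma sum_sum_mul_deriv_comp_le_zero {Φ φ : ℝ → ℝ} (f : S → ℝ)
    (hκ_off : ∀ x y, x ≠ y → 0 ≤ κ x y) (hκ_row : ∀ x, ∑ y, κ x y = 0)
    (hq_pos : ∀ x, 0 < q x) (hq_inv : ∀ x, ∑ y, q y * κ y x = 0)
    (hΦ : ConvexOn ℝ (Set.Ioi 0) Φ) (hφ : ∀ u : ℝ, 0 < u → HasDerivAt Φ (φ u) u)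
    (hf : ∀ x, 0 < f x) :
    ∑ x, ∑ y, q y * κ y x * f y * φ (f x) ≤ 0 := by
  simp_rw [mul_assoc (q _ * κ _ _)]
  refine sum_sum_mul_le_zero_of_le_sub (fun y => Φ (f y)) (fun x => Φ (f x) - f x * φ (f x))
    (fun x y hxy => mul_nonneg (hq_pos y).le (hκ_off y x hxy.symm))
    (fun y => by rw [← mul_sum, hκ_row, mul_zero]) hq_inv (fun x y _ => ?_) (fun x => by ring)
  have := hΦ.mul_sub_le_sub_of_hasDerivAt (hf y) (hf x) (hφ _ (hf x))
  linarith

lemma hasDerivAt_sum_mul_comp_of_backward {Φ φ : ℝ → ℝ} {ℓ : ℝ → S → ℝ} {t : ℝ}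
    (hq_pos : ∀ x, 0 < q x) (hφ : ∀ u : ℝ, 0 < u → HasDerivAt Φ (φ u) u)
    (hℓ_pos : ∀ x, 0 < ℓ t x)
    (hℓ : ∀ x, HasDerivAt (fun s => ℓ s x) (∑ y, (q y / q x) * κ y x * ℓ t y) t) :
    HasDerivAt (fun s => ∑ x, q x * Φ (ℓ s x))
      (∑ x, ∑ y, q y * κ y x * ℓ t y * φ (ℓ t x)) t := by
  refine HasDerivAt.fun_sum fun x _ =>
    (((hφ _ (hℓ_pos x)).comp t (hℓ x)).const_mul (q x)).congr_deriv ?_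
  rw [mul_sum, mul_sum]
  refine sum_congr rfl fun y _ => ?_
  field_simp [(hq_pos x).ne']

end Generator

theorem generalized_de_bruijn_general
    {S : Type*} [Fintype S] (κ : S → S → ℝ) (q : S → ℝ)
    (Φ φ : ℝ → ℝ) (ℓ : ℝ → S → ℝ)
    (hκ_off : ∀ x y, x ≠ y → 0 ≤ κ x y)
    (hκ_row : ∀ x, ∑ y, κ x y = 0)
    (hq_pos : ∀ x, 0 < q x)
    (hq_inv : ∀ x, ∑ y, q y * κ y x = 0)
    (hΦ : ConvexOn ℝ (Set.Ioi (0:ℝ)) Φ)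
    (hφ : ∀ x : ℝ, 0 < x → HasDerivAt Φ (φ x) x)
    (hℓ_pos : ∀ t x, 0 < ℓ t x)
    (hℓ : ∀ t x, HasDerivAt (fun s => ℓ s x)
        (∑ y, (q y / q x) * κ y x * ℓ t y) t) :
    (∀ t, HasDerivAt (fun s => ∑ x, q x * Φ (ℓ s x))
        (-(-(∑ x, ∑ y, q y * κ y x * ℓ t y * φ (ℓ t x)))) t)
    ∧ Antitone (fun t => ∑ x, q x * Φ (ℓ t x)) := by
  have hderiv := fun t => hasDerivAt_sum_mul_comp_of_backward hq_pos hφ (hℓ_pos t) (hℓ t)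
  refine ⟨fun t => by simpa only [neg_neg] using hderiv t, ?_⟩
  exact antitone_of_hasDerivAt_nonpos hderiv fun t =>
    sum_sum_mul_deriv_comp_le_zero (ℓ t) hκ_off hκ_row hq_pos hq_inv hΦ hφ (hℓ_pos t)

theorem generalized_de_bruijn
    {S : Type*} [Fintype S] (κ : S → S → ℝ) (q : S → ℝ)
    (Φ φ : ℝ → ℝ) (ℓ : ℝ → S → ℝ)
    (hκ_off : ∀ x y, x ≠ y → 0 ≤ κ x y)
    (hκ_row : ∀ x, ∑ y, κ x y = 0)
    (hq_pos : ∀ x, 0 < q x)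
    (hq_sum : ∑ x, q x = 1)
    (hq_inv : ∀ x, ∑ y, q y * κ y x = 0)
    (hΦ : ConvexOn ℝ (Set.Ioi (0:ℝ)) Φ)
    (hΦ1 : Φ 1 = 0)
    (hφ : ∀ x : ℝ, 0 < x → HasDerivAt Φ (φ x) x)
    (hφc : ContinuousOn φ (Set.Ioi (0:ℝ)))
    (hℓ_pos : ∀ t x, 0 < ℓ t x)
    (hℓ : ∀ t x, HasDerivAt (fun s => ℓ s x)
        (∑ y, (q y / q x) * κ y x * ℓ t y) t) :
    (∀ t, HasDerivAt (fun s => ∑ x, q x * Φ (ℓ s x))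
        (-(-(∑ x, ∑ y, q y * κ y x * ℓ t y * φ (ℓ t x)))) t)
    ∧ Antitone (fun t => ∑ x, q x * Φ (ℓ t x)) :=
  generalized_de_bruijn_general κ q Φ φ ℓ hκ_off hκ_row hq_pos hq_inv hΦ hφ hℓ_pos hℓ
end

section
/- Let f : [0,1] → ℝ be continuous, right-differentiable at 0, and satisfy f(t+h) - 2f(t) + f(t-h) ≥ κh² for some κ ∈ ℝ and all t, h ≥ 0 with 0 ≤ t - h and t + h ≤ 1. Then f(1) ≥ f(0) + f'(0) + κ/2. -/
/-!
Subtracting `κ t² / 2` from `f` gives a function `g` with nonnegative second differences, so the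
chord slopes `(g p - g 0) / p` do not decrease when `p` is doubled. Along `p = 2⁻ⁿ` they
therefore stay below `g 1 - g 0` and tend to `g'(0) = f'(0)`, whence
`f'(0) ≤ g 1 - g 0 = f 1 - f 0 - κ / 2`.
-/

open Filter Set Topology

lemma slope_le_slope_two_mul_iff {g : ℝ → ℝ} {x p : ℝ} (hp : 0 < p) :
    slope g x (x + p) ≤ slope g x (x + 2 * p) ↔ 2 * g (x + p) ≤ g x + g (x + 2 * p) := by
  rw [slope_def_field, slope_def_field, add_sub_cancel_left, add_sub_cancel_left,
    div_le_div_iff₀ hp (by positivity)]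
  constructor <;> intro h <;> nlinarith

lemma slope_add_div_two_pow_le {g : ℝ → ℝ} {x a : ℝ} (ha : 0 < a)
    (hdouble : ∀ p, 0 < p → 2 * p ≤ a → slope g x (x + p) ≤ slope g x (x + 2 * p))
    (n : ℕ) : slope g x (x + a / 2 ^ n) ≤ slope g x (x + a) := by
  induction n with
  | zero => simp
  | succ n ih =>
    have hhalf : 2 * (a / 2 ^ (n + 1)) = a / 2 ^ n := by rw [pow_succ]; field_simp
    have hle : a / 2 ^ n ≤ a := div_le_self ha.le (one_le_pow₀ one_le_two)
    calc slope g x (x + a / 2 ^ (n + 1))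
        ≤ slope g x (x + 2 * (a / 2 ^ (n + 1))) :=
          hdouble _ (by positivity) (hhalf ▸ hle)
      _ = slope g x (x + a / 2 ^ n) := by rw [hhalf]
      _ ≤ slope g x (x + a) := ih

lemma HasDerivWithinAt.le_slope_of_doubling {g : ℝ → ℝ} {d x a : ℝ}
    (hg : HasDerivWithinAt g d (Ici x) x) (ha : 0 < a)
    (hdouble : ∀ p, 0 < p → 2 * p ≤ a → slope g x (x + p) ≤ slope g x (x + 2 * p)) :
    d ≤ slope g x (x + a) := by
  have hseq : Tendsto (fun n : ℕ => x + a / 2 ^ n) atTop (𝓝[Ici x \ {x}] x) := by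
    refine tendsto_nhdsWithin_of_tendsto_nhds_of_eventually_within _ ?_
      (Eventually.of_forall fun n => ?_)
    · simpa using tendsto_const_nhds.add
        (tendsto_const_nhds.div_atTop (tendsto_pow_atTop_atTop_of_one_lt (one_lt_two (α := ℝ))))
    · have : 0 < a / 2 ^ n := by positivity
      exact ⟨show x ≤ x + a / 2 ^ n by linarith,
        fun h => by rw [mem_singleton_iff] at h; linarith⟩
  exact le_of_tendsto ((hasDerivWithinAt_iff_tendsto_slope.mp hg).comp hseq)
    (Eventually.of_forall (slope_add_div_two_pow_le ha hdouble))

theorem discrete_second_derivative_bound_general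
    (f : ℝ → ℝ) (κ d : ℝ)
    (hd : HasDerivWithinAt f d (Set.Ici (0:ℝ)) 0)
    (hconv : ∀ t h : ℝ, 0 ≤ t → 0 ≤ h → 0 ≤ t - h → t + h ≤ 1 →
      κ * h^2 ≤ f (t + h) - 2 * f t + f (t - h)) :
    f 0 + d + κ / 2 ≤ f 1 := by
  have hgd : HasDerivWithinAt (fun t => f t - κ / 2 * t ^ 2) d (Ici 0) 0 :=
    (hd.sub ((hasDerivAt_pow 2 (0 : ℝ)).const_mul (κ / 2)).hasDerivWithinAt).congr_deriv
      (by simp)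
  have hslope := hgd.le_slope_of_doubling one_pos fun p hp hp1 => by
    rw [slope_le_slope_two_mul_iff hp]
    have := hconv p p hp.le hp.le (by simp) (by linarith)
    simp only [zero_add, sub_self, ← two_mul] at this ⊢
    linear_combination this
  calc f 0 + d + κ / 2
      ≤ f 0 + slope (fun t => f t - κ / 2 * t ^ 2) 0 (0 + 1) + κ / 2 := by linarith
    _ = f 1 := by norm_num [slope_def_field]

theorem discrete_second_derivative_bound
    (f : ℝ → ℝ) (κ d : ℝ)
    (hf : ContinuousOn f (Set.Icc 0 1))
    (hd : HasDerivWithinAt f d (Set.Ici (0:ℝ)) 0)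
    (hconv : ∀ t h : ℝ, 0 ≤ t → 0 ≤ h → 0 ≤ t - h → t + h ≤ 1 →
      κ * h^2 ≤ f (t + h) - 2 * f t + f (t - h)) :
    f 0 + d + κ / 2 ≤ f 1 :=
  discrete_second_derivative_bound_general f κ d hd hconv
end
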